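/- Let K ⊆ ℝ^l be a cone with dual cone K*, G ∈ ℝ^{l×n}, g ∈ ℝ^l, and S = {s ∈ ℝⁿ : g − G s ∈ K}. Let c ∈ ℝ^p, τ ∈ ℝ, P ∈ ℝ^{p×n}, p̄ ∈ ℝ^p, C ∈ ℝ^{q×p}, D ∈ ℝ^{q×m}, d ∈ ℝ^q, Y ∈ ℝ^{m×n}, y ∈ ℝ^m. Suppose there exist μ ∈ K* and Λ ∈ ℝ^{q×l} with each row of Λ in K* such that: cᵀ p̄ + ⟨μ, g⟩ ≤ τ, Gᵀ μ = Pᵀ c, C p̄ + D y + Λ g ≤ d componentwise, and Λ G = C P + D Y. Then for every s ∈ S: cᵀ(P s + p̄) ≤ τ and C(P s + p̄) + D(Y s + y) ≤ d componentwise. In particular, every feasible point of the finite-dimensional dualized problem yields an affine policy π̃(s) = P s + p̄ that is robustly feasible over S. -/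
import Mathlib


/-- Feasibility of the dualized finite-dimensional problem implies robust feasibility of
the corresponding affine policy `π̃(s) = P s + p̄` over the primitive set `S`. -/
theorem dual_feasible_implies_affine_policy_robust
    {l n q m p : ℕ} (K : Set (Fin l → ℝ))
    (hK : ∀ (a : ℝ), 0 ≤ a → ∀ x ∈ K, a • x ∈ K)
    (Kstar : Set (Fin l → ℝ))
    (hKstar : Kstar = {μ : Fin l → ℝ | ∀ x ∈ K, 0 ≤ ∑ i, μ i * x i})
    (G : Matrix (Fin l) (Fin n) ℝ) (g : Fin l → ℝ)
    (S : Set (Fin n → ℝ)) (hS : S = {s | g - G.mulVec s ∈ K})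
    (c : Fin p → ℝ) (τ : ℝ)
    (P : Matrix (Fin p) (Fin n) ℝ) (pbar : Fin p → ℝ)
    (C : Matrix (Fin q) (Fin p) ℝ)
    (D : Matrix (Fin q) (Fin m) ℝ) (d : Fin q → ℝ)
    (Y : Matrix (Fin m) (Fin n) ℝ) (y : Fin m → ℝ)
    (μ : Fin l → ℝ) (hμ : μ ∈ Kstar)
    (Λ : Matrix (Fin q) (Fin l) ℝ) (hΛ : ∀ i : Fin q, (fun j => Λ i j) ∈ Kstar)
    (hobj : (∑ i, c i * pbar i) + (∑ j, μ j * g j) ≤ τ)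
    (hGμ : G.transpose.mulVec μ = P.transpose.mulVec c)
    (hineq : C.mulVec pbar + D.mulVec y + Λ.mulVec g ≤ d)
    (hΛG : Λ * G = C * P + D * Y) :
    ∀ s ∈ S, (∑ i, c i * (P.mulVec s + pbar) i) ≤ τ ∧
      C.mulVec (P.mulVec s + pbar) + D.mulVec (Y.mulVec s + y) ≤ d := by
  subst hS hKstar
  intro s hs
  have hμK : 0 ≤ dotProduct μ (g - G.mulVec s) := hμ _ hs
  -- key: μ ⬝ᵥ G s = c ⬝ᵥ P s
  have hkey : dotProduct μ (G.mulVec s) = dotProduct c (P.mulVec s) := by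
    rw [Matrix.dotProduct_mulVec, Matrix.dotProduct_mulVec,
      ← Matrix.mulVec_transpose, ← Matrix.mulVec_transpose, hGμ]
  constructor
  · have h1 : dotProduct μ (G.mulVec s) ≤ dotProduct μ g := by
      have := hμK
      rw [dotProduct_sub] at this
      linarith
    calc (∑ i, c i * (P.mulVec s + pbar) i)
        = dotProduct c (P.mulVec s) + ∑ i, c i * pbar i := by
          simp [dotProduct, Pi.add_apply, mul_add, Finset.sum_add_distrib]
      _ = dotProduct μ (G.mulVec s) + ∑ i, c i * pbar i := by rw [hkey]
      _ ≤ dotProduct μ g + ∑ i, c i * pbar i := by linarith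
      _ ≤ τ := by
          have : dotProduct μ g = ∑ j, μ j * g j := rfl
          linarith
  · intro i
    have hΛi : 0 ≤ dotProduct (fun j => Λ i j) (g - G.mulVec s) := hΛ i _ hs
    have hrow : dotProduct (fun j => Λ i j) (G.mulVec s) ≤ Λ.mulVec g i := by
      rw [dotProduct_sub] at hΛi
      have : Λ.mulVec g i = dotProduct (fun j => Λ i j) g := rfl
      linarith
    have hmv : (C.mulVec (P.mulVec s + pbar) + D.mulVec (Y.mulVec s + y)) i
        = dotProduct (fun j => Λ i j) (G.mulVec s)
          + (C.mulVec pbar + D.mulVec y) i := by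
      have h1 : ((Λ * G).mulVec s) i = ((C * P + D * Y).mulVec s) i := by rw [hΛG]
      rw [Matrix.add_mulVec, ← Matrix.mulVec_mulVec, ← Matrix.mulVec_mulVec, ← Matrix.mulVec_mulVec] at h1
      have h2 : Λ.mulVec (G.mulVec s) i
          = dotProduct (fun j => Λ i j) (G.mulVec s) := rfl
      simp only [Matrix.mulVec_add, Pi.add_apply] at *
      linarith
    have hd := hineq i
    simp only [Pi.add_apply] at hd hmv ⊢
    linarith
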